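/- arXiv:2511.08789 — 4 statements merged into one kernel-verified Lean document; each statement's English description precedes it below -/
import Mathlib

section
/- Let X be an integrable random variable with values in a finite-dimensional real inner product space E, let F : E → ℝ be strictly convex and differentiable, and suppose F(X) is integrable. Then the mean E[X] is the unique minimizer of z ↦ E[D_F(X, z)]: for every z ≠ E[X], E[D_F(X, z)] > E[D_F(X, E[X])]. -/
open MeasureTheory ProbabilityTheory
open scoped InnerProductSpace

/-- The Bregman divergence `D_F(x‖y) = F(x) − F(y) − ⟨∇F(y), x − y⟩` derived from `F`. -/
noncomputable def bregman {E : Type*} [NormedAddCommGroup E] [InnerProductSpace ℝ E]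
    [CompleteSpace E] (F : E → ℝ) (x y : E) : ℝ :=
  F x - F y - ⟪gradient F y, x - y⟫_ℝ

/-- Strict gradient inequality for strictly convex differentiable functions. -/
lemma strict_gradient_ineq {E : Type*} [NormedAddCommGroup E] [InnerProductSpace ℝ E]
    [CompleteSpace E] (F : E → ℝ) (hFconv : StrictConvexOn ℝ Set.univ F)
    (hFdiff : Differentiable ℝ F) {z w : E} (hzw : z ≠ w) :
    ⟪gradient F z, w - z⟫_ℝ < F w - F z := by
  set v := w - z with hv
  set g : ℝ → ℝ := fun t => F (z + t • v) with hg
  -- derivative of g at 0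
  have hline : HasDerivAt (fun t : ℝ => z + t • v) v 0 := by
    simpa using ((hasDerivAt_id (0 : ℝ)).smul_const v).const_add z
  have hgd : HasDerivAt g (fderiv ℝ F z v) 0 := by
    have := ((hFdiff (z + (0 : ℝ) • v)).hasFDerivAt.comp_hasDerivAt 0 hline)
    simp only [zero_smul, add_zero] at this
    exact this
  -- fderiv applied equals inner with gradient
  have hfg : fderiv ℝ F z v = ⟪gradient F z, v⟫_ℝ := by
    have h1 : HasGradientAt F (gradient F z) z := (hFdiff z).hasGradientAt
    have h2 : HasFDerivAt F ((InnerProductSpace.toDual ℝ E) (gradient F z)) z :=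
      hasGradientAt_iff_hasFDerivAt.mp h1
    rw [h2.fderiv]
    simp [InnerProductSpace.toDual_apply_apply]
  -- convexity of g
  have hgconv : ConvexOn ℝ Set.univ g := by
    have h := hFconv.convexOn.comp_affineMap (AffineMap.lineMap z w)
    have : g = F ∘ (AffineMap.lineMap z w) := by
      funext t
      simp [g, AffineMap.lineMap_apply, hv]
      abel_nf
    rw [this]
    simpa using h
  -- gradient inequality via slope at 1/2
  have hslope : fderiv ℝ F z v ≤ slope g 0 (1 / 2) :=
    hgconv.le_slope_of_hasDerivAt (Set.mem_univ 0) (Set.mem_univ (1 / 2)) (by norm_num) hgd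
  have hm : z + (1 / 2 : ℝ) • v = (1 / 2 : ℝ) • z + (1 / 2 : ℝ) • w := by
    rw [hv, smul_sub]
    module
  have hstrict : F (z + (1 / 2 : ℝ) • v) < (1 / 2 : ℝ) * F z + (1 / 2 : ℝ) * F w := by
    rw [hm]
    have := hFconv.2 (Set.mem_univ z) (Set.mem_univ w) hzw (by norm_num : (0:ℝ) < 1/2)
      (by norm_num : (0:ℝ) < 1/2) (by norm_num : (1/2 : ℝ) + 1/2 = 1)
    simpa using this
  have hslope_val : slope g 0 (1 / 2) = 2 * (F (z + (1 / 2 : ℝ) • v) - F z) := by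
    rw [slope_def_field]
    have h0 : g 0 = F z := by simp [g]
    rw [h0]
    field_simp [g]
    ring
  rw [hfg] at hslope
  calc ⟪gradient F z, v⟫_ℝ ≤ 2 * (F (z + (1 / 2 : ℝ) • v) - F z) := by rwa [hslope_val] at hslope
    _ < 2 * (((1 / 2 : ℝ) * F z + (1 / 2 : ℝ) * F w) - F z) := by linarith
    _ = F w - F z := by ring

/-- **The mean uniquely minimizes the expected Bregman divergence in the second argument.**
`E[X]` is the unique minimizer of `z ↦ E[D_F(X‖z)]`: for every `z ≠ E[X]`,
`E[D_F(X‖z)] > E[D_F(X‖E[X])]`. -/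
theorem expected_bregman_unique_min_right
    {E : Type*} [NormedAddCommGroup E] [InnerProductSpace ℝ E] [FiniteDimensional ℝ E]
    {Ω : Type*} [MeasureSpace Ω] [IsProbabilityMeasure (ℙ : Measure Ω)]
    (F : E → ℝ) (hFconv : StrictConvexOn ℝ Set.univ F) (hFdiff : Differentiable ℝ F)
    (X : Ω → E) (hX : Integrable X)
    (hFX : Integrable (fun ω => F (X ω))) :
    ∀ z, z ≠ (∫ ω, X ω) →
      (∫ ω, bregman F (X ω) (∫ ω', X ω')) < ∫ ω, bregman F (X ω) z := by
  intro z hz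
  set μ := ∫ ω, X ω with hμ
  have key : ∀ y : E, (∫ ω, bregman F (X ω) y)
      = (∫ ω, F (X ω)) - F y - ⟪gradient F y, μ - y⟫_ℝ := by
    intro y
    have hinner : Integrable (fun ω => ⟪gradient F y, X ω - y⟫_ℝ) := by
      have : Integrable (fun ω => X ω - y) := hX.sub (integrable_const y)
      exact this.const_inner (gradient F y)
    have h1 : (∫ ω, bregman F (X ω) y)
        = ∫ ω, (F (X ω) - F y - ⟪gradient F y, X ω - y⟫_ℝ) := rfl
    have hA : Integrable (fun ω => F (X ω) - F y) := hFX.sub (integrable_const (F y))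
    have hB : (∫ ω, (F (X ω) - F y)) = (∫ ω, F (X ω)) - ∫ (_ : Ω), F y :=
      integral_sub hFX (integrable_const (F y))
    rw [h1, integral_sub hA hinner, hB]
    have h2 : (∫ ω, ⟪gradient F y, X ω - y⟫_ℝ) = ⟪gradient F y, μ - y⟫_ℝ := by
      have hXy : Integrable (fun ω => X ω - y) := hX.sub (integrable_const y)
      have h3 := integral_inner (𝕜 := ℝ) hXy (gradient F y)
      rw [h3, integral_sub hX (integrable_const y)]
      simp [hμ]
    rw [h2]
    simp
  rw [key μ, key z]
  have hgi : ⟪gradient F z, μ - z⟫_ℝ < F μ - F z :=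
    strict_gradient_ineq F hFconv hFdiff hz
  simp only [sub_self, inner_zero_right]
  linarith
end

section
/- Let X be an integrable random variable with values in a finite-dimensional real inner product space E, let F : E → ℝ be strictly convex and differentiable, and suppose F(X) is integrable. Then for every point s ∈ E the exact decomposition E[D_F(X, s)] = D_F(E[X], s) + E[D_F(X, E[X])] holds. -/
open MeasureTheory ProbabilityTheory
open scoped InnerProductSpace

/-- **Decomposition of the expected Bregman divergence (second argument).**
For any `s`, `E[D_F(X‖s)] = D_F(E[X]‖s) + E[D_F(X‖E[X])]`. -/
theorem expected_bregman_decomp_right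
    {E : Type*} [NormedAddCommGroup E] [InnerProductSpace ℝ E] [FiniteDimensional ℝ E]
    {Ω : Type*} [MeasureSpace Ω] [IsProbabilityMeasure (ℙ : Measure Ω)]
    (F : E → ℝ) (hFconv : StrictConvexOn ℝ Set.univ F) (hFdiff : Differentiable ℝ F)
    (X : Ω → E) (hX : Integrable X)
    (hFX : Integrable (fun ω => F (X ω))) :
    ∀ s : E, (∫ ω, bregman F (X ω) s) =
      bregman F (∫ ω', X ω') s + ∫ ω, bregman F (X ω) (∫ ω', X ω') := by
  have key : ∀ y : E, (∫ ω, bregman F (X ω) y) =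
      (∫ ω, F (X ω)) - F y - ⟪gradient F y, (∫ ω, X ω) - y⟫_ℝ := by
    intro y
    have h1 : Integrable (fun ω => X ω - y) := hX.sub (integrable_const y)
    have h2 : Integrable (fun ω => ⟪gradient F y, X ω - y⟫_ℝ) := h1.const_inner _
    calc (∫ ω, bregman F (X ω) y)
        = ∫ ω, (F (X ω) - F y - ⟪gradient F y, X ω - y⟫_ℝ) := rfl
      _ = (∫ ω, (F (X ω) - F y)) - ∫ ω, ⟪gradient F y, X ω - y⟫_ℝ :=
          integral_sub (hFX.sub (integrable_const _)) h2
      _ = (∫ ω, F (X ω)) - F y - ⟪gradient F y, (∫ ω, X ω - y)⟫_ℝ := by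
          rw [integral_sub hFX (integrable_const _), integral_const, integral_inner h1]
          simp
      _ = (∫ ω, F (X ω)) - F y - ⟪gradient F y, (∫ ω, X ω) - y⟫_ℝ := by
          rw [integral_sub hX (integrable_const _), integral_const]
          simp
  intro s
  rw [key s, key (∫ ω', X ω')]
  simp only [bregman, sub_self, inner_zero_right]
  ring
end

section
/- Let Y and G be independent random variables with values in a finite-dimensional real inner product space E, let F : E → ℝ be strictly convex and differentiable, and suppose Y, G, F(Y), F(G), and ∇F(G) are integrable (and the Bregman divergences below are integrable). If ḡ ∈ E satisfies ∇F(ḡ) = E[∇F(G)], then the expected loss decomposes exactly into noise, bias, and variance terms: E[D_F(Y, G)] = E[D_F(Y, E[Y])] + D_F(E[Y], ḡ) + E[D_F(ḡ, G)]. (Here Y plays the role of the target given the input, G = f_D(X) the role of the prediction of a model trained on an independent random dataset D, E[Y] = f*(X) the optimal prediction, and ḡ = f̄(X) the average prediction.) -/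
open MeasureTheory ProbabilityTheory
open scoped InnerProductSpace

section Aux

open scoped RealInnerProductSpace

/-- Componentwise independence product formula: for independent integrable `X, Z`,
the inner product is integrable and its integral factors. -/
theorem indep_integral_inner
    {E : Type*} [NormedAddCommGroup E] [InnerProductSpace ℝ E] [FiniteDimensional ℝ E]
    [MeasurableSpace E] [BorelSpace E]
    {Ω : Type*} [MeasureSpace Ω] [IsProbabilityMeasure (ℙ : Measure Ω)]
    {X Z : Ω → E} (h : IndepFun X Z) (hX : Integrable X) (hZ : Integrable Z) :
    Integrable (fun ω => ⟪X ω, Z ω⟫) ∧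
      (∫ ω, ⟪X ω, Z ω⟫) = ⟪∫ ω, X ω, ∫ ω, Z ω⟫ := by
  let b := stdOrthonormalBasis ℝ E
  have hcomp : ∀ i, IndepFun (fun ω => ⟪X ω, b i⟫) (fun ω => ⟪b i, Z ω⟫) := by
    intro i
    exact h.comp ((continuous_id.inner continuous_const).measurable)
      ((continuous_const.inner continuous_id).measurable)
  have hXi : ∀ i, Integrable (fun ω => ⟪X ω, b i⟫) := fun i => hX.inner_const _
  have hZi : ∀ i, Integrable (fun ω => ⟪b i, Z ω⟫) := fun i => hZ.const_inner _
  have hmul : ∀ i, Integrable (fun ω => ⟪X ω, b i⟫ * ⟪b i, Z ω⟫) := by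
    intro i
    exact (hcomp i).integrable_mul (hXi i) (hZi i)
  have hrw : (fun ω => ⟪X ω, Z ω⟫)
      = fun ω => ∑ i, ⟪X ω, b i⟫ * ⟪b i, Z ω⟫ := by
    funext ω
    rw [b.sum_inner_mul_inner]
  constructor
  · rw [hrw]
    exact integrable_finset_sum _ fun i _ => hmul i
  · rw [hrw, integral_finset_sum _ fun i _ => hmul i]
    have : ∀ i, (∫ ω, ⟪X ω, b i⟫ * ⟪b i, Z ω⟫)
        = ⟪∫ ω, X ω, b i⟫ * ⟪b i, ∫ ω, Z ω⟫ := by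
      intro i
      rw [show (fun ω => ⟪X ω, b i⟫ * ⟪b i, Z ω⟫)
            = (fun ω => ⟪X ω, b i⟫) * (fun ω => ⟪b i, Z ω⟫) from rfl,
          ProbabilityTheory.IndepFun.integral_mul_eq_mul_integral (hcomp i)
            (hXi i).aestronglyMeasurable (hZi i).aestronglyMeasurable]
      congr 1
      · rw [real_inner_comm]
        rw [← integral_inner hX (b i)]
        simp [real_inner_comm]
      · exact integral_inner hZ (b i)
    simp_rw [this]
    rw [b.sum_inner_mul_inner]

end Aux

/-- **Generalized bias-variance decomposition for Bregman divergences.**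
For independent `Y` (target) and `G` (prediction), if `∇F(ḡ) = E[∇F(G)]` then
`E[D_F(Y‖G)] = E[D_F(Y‖E[Y])] + D_F(E[Y]‖ḡ) + E[D_F(ḡ‖G)]`
(noise + bias + variance). -/
theorem bregman_bias_variance_decomposition
    {E : Type*} [NormedAddCommGroup E] [InnerProductSpace ℝ E] [FiniteDimensional ℝ E]
    [MeasurableSpace E] [BorelSpace E]
    {Ω : Type*} [MeasureSpace Ω] [IsProbabilityMeasure (ℙ : Measure Ω)]
    (F : E → ℝ) (hFconv : StrictConvexOn ℝ Set.univ F) (hFdiff : Differentiable ℝ F)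
    (Y G : Ω → E) (hindep : IndepFun Y G)
    (hY : Integrable Y) (hG : Integrable G)
    (hFY : Integrable (fun ω => F (Y ω))) (hFG : Integrable (fun ω => F (G ω)))
    (hgFG : Integrable (fun ω => gradient F (G ω)))
    (hDYG : Integrable (fun ω => bregman F (Y ω) (G ω)))
    (hDYmean : Integrable (fun ω => bregman F (Y ω) (∫ ω', Y ω')))
    (gbar : E) (hgbar : gradient F gbar = ∫ ω, gradient F (G ω))
    (hDbarG : Integrable (fun ω => bregman F gbar (G ω))) :
    (∫ ω, bregman F (Y ω) (G ω)) =
      (∫ ω, bregman F (Y ω) (∫ ω', Y ω'))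
        + bregman F (∫ ω', Y ω') gbar
        + ∫ ω, bregman F gbar (G ω) := by
  set Ybar := ∫ ω', Y ω' with hYbar
  -- measurability of the gradient map
  have mgrad : Measurable (gradient F) := by
    have h1 : Measurable (fderiv ℝ F) := measurable_fderiv ℝ F
    exact ((InnerProductSpace.toDual ℝ E).symm.continuous.measurable).comp h1
  -- independence of ∇F(G) and Y
  have hindep' : IndepFun (fun ω => gradient F (G ω)) Y :=
    hindep.symm.comp mgrad measurable_id
  obtain ⟨hI1, hE1⟩ := indep_integral_inner hindep' hgFG hY
  have hE1' : (∫ ω, ⟪gradient F (G ω), Y ω⟫_ℝ) = ⟪gradient F gbar, Ybar⟫_ℝ := by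
    rw [hE1, ← hgbar]
  have hI2 : Integrable (fun ω => ⟪gradient F (G ω), gbar⟫_ℝ) := hgFG.inner_const gbar
  have hE2 : (∫ ω, ⟪gradient F (G ω), gbar⟫_ℝ) = ⟪gradient F gbar, gbar⟫_ℝ := by
    have hc : (fun ω => ⟪gradient F (G ω), gbar⟫_ℝ)
        = fun ω => ⟪gbar, gradient F (G ω)⟫_ℝ := funext fun ω => real_inner_comm _ _
    rw [hc, integral_inner hgFG gbar, ← hgbar, real_inner_comm]
  -- mean of Y minus constant has integral zero
  have hYsub : Integrable (fun ω => Y ω - Ybar) := hY.sub (integrable_const _)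
  have hmean : (∫ ω, (Y ω - Ybar)) = 0 := by
    rw [integral_sub hY (integrable_const _), integral_const]
    simp [hYbar]
  -- noise term
  have h3 : (∫ ω, bregman F (Y ω) Ybar) = (∫ ω, F (Y ω)) - F Ybar := by
    have hinner : Integrable (fun ω => ⟪gradient F Ybar, Y ω - Ybar⟫_ℝ) :=
      hYsub.const_inner _
    calc (∫ ω, bregman F (Y ω) Ybar)
        = ∫ ω, ((F (Y ω) - F Ybar) - ⟪gradient F Ybar, Y ω - Ybar⟫_ℝ) := rfl
      _ = (∫ ω, (F (Y ω) - F Ybar)) - ∫ ω, ⟪gradient F Ybar, Y ω - Ybar⟫_ℝ :=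
          integral_sub (hFY.sub (integrable_const _)) hinner
      _ = (∫ ω, F (Y ω)) - F Ybar := by
          rw [integral_inner hYsub, hmean, inner_zero_right,
            integral_sub hFY (integrable_const _), integral_const]
          simp
  -- difference of the two random Bregman terms
  have key : (fun ω => bregman F (Y ω) (G ω) - bregman F gbar (G ω))
      = fun ω => (F (Y ω) - F gbar)
          - (⟪gradient F (G ω), Y ω⟫_ℝ - ⟪gradient F (G ω), gbar⟫_ℝ) := by
    funext ω
    simp only [bregman, inner_sub_right]
    ring
  have h4 : (∫ ω, bregman F (Y ω) (G ω)) - (∫ ω, bregman F gbar (G ω))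
      = ((∫ ω, F (Y ω)) - F gbar)
          - (⟪gradient F gbar, Ybar⟫_ℝ - ⟪gradient F gbar, gbar⟫_ℝ) := by
    have hA : Integrable (fun ω => F (Y ω) - F gbar) := hFY.sub (integrable_const _)
    have hB : Integrable (fun ω =>
        ⟪gradient F (G ω), Y ω⟫_ℝ - ⟪gradient F (G ω), gbar⟫_ℝ) := hI1.sub hI2
    rw [← integral_sub hDYG hDbarG]
    simp_rw [key]
    rw [integral_sub hA hB, integral_sub hFY (integrable_const _), integral_const,
      integral_sub hI1 hI2, hE1', hE2]
    simp
  have h5 : bregman F Ybar gbar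
      = F Ybar - F gbar - (⟪gradient F gbar, Ybar⟫_ℝ - ⟪gradient F gbar, gbar⟫_ℝ) := by
    simp only [bregman, inner_sub_right]
  rw [h3, h5]
  linarith [h4]
end

section
/- Let Y and G be independent random variables with values in a finite-dimensional real inner product space E, let F : E → ℝ be strictly convex and differentiable, and suppose Y, G, F(Y), F(G) are integrable (and the Bregman divergences below are integrable). Then E[D_F(Y, G)] = E[D_F(Y, E[Y])] + E[D_F(E[Y], G)]; that is, the expected prediction error splits exactly into an intrinsic noise term and the expected divergence of the prediction from the conditional mean. -/
open MeasureTheory ProbabilityTheory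
open scoped InnerProductSpace

/-- **Noise decomposition of the expected Bregman prediction error.**
For independent `Y` (target) and `G` (prediction),
`E[D_F(Y‖G)] = E[D_F(Y‖E[Y])] + E[D_F(E[Y]‖G)]`: the expected prediction error splits
into the intrinsic noise and the expected divergence of the prediction from the mean. -/
theorem bregman_noise_decomposition
    {E : Type*} [NormedAddCommGroup E] [InnerProductSpace ℝ E] [FiniteDimensional ℝ E]
    [MeasurableSpace E] [BorelSpace E]
    {Ω : Type*} [MeasureSpace Ω] [IsProbabilityMeasure (ℙ : Measure Ω)]
    (F : E → ℝ) (hFconv : StrictConvexOn ℝ Set.univ F) (hFdiff : Differentiable ℝ F)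
    (Y G : Ω → E) (hindep : IndepFun Y G)
    (hY : Integrable Y) (hG : Integrable G)
    (hFY : Integrable (fun ω => F (Y ω))) (hFG : Integrable (fun ω => F (G ω)))
    (hDYG : Integrable (fun ω => bregman F (Y ω) (G ω)))
    (hDYmean : Integrable (fun ω => bregman F (Y ω) (∫ ω', Y ω')))
    (hDmeanG : Integrable (fun ω => bregman F (∫ ω', Y ω') (G ω))) :
    (∫ ω, bregman F (Y ω) (G ω)) =
      (∫ ω, bregman F (Y ω) (∫ ω', Y ω'))
        + ∫ ω, bregman F (∫ ω', Y ω') (G ω) := by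
  set μE : E := ∫ ω', Y ω' with hμE
  -- measurability of the gradient
  have hgrad_meas : Measurable (gradient F) := by
    have h1 : Measurable (fderiv ℝ F) := measurable_fderiv ℝ F
    have : gradient F = fun x => (InnerProductSpace.toDual ℝ E).symm (fderiv ℝ F x) := by
      funext x; rfl
    rw [this]
    exact (InnerProductSpace.toDual ℝ E).symm.continuous.measurable.comp h1
  -- pointwise key identity
  have key : ∀ ω, bregman F (Y ω) (G ω)
      = bregman F (Y ω) μE + bregman F μE (G ω)
        + ⟪gradient F (G ω), μE - Y ω⟫_ℝ + ⟪gradient F μE, Y ω - μE⟫_ℝ := by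
    intro ω
    simp only [bregman, inner_sub_right]
    ring
  -- integrability of the inner-product correction terms
  have h3 : Integrable (fun ω => ⟪gradient F μE, Y ω - μE⟫_ℝ) :=
    Integrable.const_inner _ (hY.sub (integrable_const μE))
  have h4 : Integrable (fun ω => ⟪gradient F (G ω), μE - Y ω⟫_ℝ) := by
    have heq : (fun ω => ⟪gradient F (G ω), μE - Y ω⟫_ℝ)
        = fun ω => bregman F (Y ω) (G ω) - bregman F (Y ω) μE - bregman F μE (G ω)
            - ⟪gradient F μE, Y ω - μE⟫_ℝ := by
      funext ω; have := key ω; linarith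
    rw [heq]
    exact ((hDYG.sub hDYmean).sub hDmeanG).sub h3
  -- the second correction term integrates to zero
  have hzero2 : (∫ ω, ⟪gradient F μE, Y ω - μE⟫_ℝ) = 0 := by
    have := (innerSL ℝ (gradient F μE)).integral_comp_comm (hY.sub (integrable_const μE))
    simp only [innerSL_apply_apply, Pi.sub_apply] at this
    rw [this, integral_sub hY (integrable_const μE), integral_const]
    simp [hμE]
  -- the first correction term integrates to zero, using independence
  have hzero1 : (∫ ω, ⟪gradient F (G ω), μE - Y ω⟫_ℝ) = 0 := by
    set φ : E × E → ℝ := fun p => ⟪gradient F p.1, μE - p.2⟫_ℝ with hφdef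
    have hφmeas : Measurable φ := by
      apply Measurable.inner
      · exact hgrad_meas.comp measurable_fst
      · exact measurable_const.sub measurable_snd
    have hGm : AEMeasurable G ℙ := hG.aemeasurable
    have hYm : AEMeasurable Y ℙ := hY.aemeasurable
    have hpair : AEMeasurable (fun ω => (G ω, Y ω)) ℙ := hGm.prodMk hYm
    have hmap : (ℙ : Measure Ω).map (fun ω => (G ω, Y ω))
        = ((ℙ : Measure Ω).map G).prod ((ℙ : Measure Ω).map Y) :=
      (indepFun_iff_map_prod_eq_prod_map_map hGm hYm).mp hindep.symm
    have hint : Integrable φ (((ℙ : Measure Ω).map G).prod ((ℙ : Measure Ω).map Y)) := by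
      rw [← hmap]
      rw [integrable_map_measure hφmeas.aestronglyMeasurable hpair]
      exact h4
    have hprob : IsProbabilityMeasure ((ℙ : Measure Ω).map Y) := Measure.isProbabilityMeasure_map hYm
    have hYlaw : Integrable (fun y : E => y) ((ℙ : Measure Ω).map Y) := by
      have : Integrable (id : E → E) ((ℙ : Measure Ω).map Y) := by
        rw [integrable_map_measure aestronglyMeasurable_id hYm]
        exact hY
      exact this
    calc (∫ ω, ⟪gradient F (G ω), μE - Y ω⟫_ℝ)
        = ∫ p, φ p ∂(((ℙ : Measure Ω).map G).prod ((ℙ : Measure Ω).map Y)) := by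
          rw [← hmap, integral_map hpair hφmeas.aestronglyMeasurable]
      _ = ∫ g, ∫ y, φ (g, y) ∂((ℙ : Measure Ω).map Y) ∂((ℙ : Measure Ω).map G) :=
          integral_prod φ hint
      _ = 0 := by
          have inner_zero : ∀ g : E, (∫ y, φ (g, y) ∂((ℙ : Measure Ω).map Y)) = 0 := by
            intro g
            have hi : Integrable (fun y : E => μE - y) ((ℙ : Measure Ω).map Y) :=
              (integrable_const μE).sub hYlaw
            have := (innerSL ℝ (gradient F g)).integral_comp_comm hi
            simp only [innerSL_apply_apply] at this
            simp only [hφdef]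
            rw [this, integral_sub (integrable_const μE) hYlaw, integral_const]
            have hid : (∫ y, y ∂((ℙ : Measure Ω).map Y)) = μE := by
              have : (∫ y, id y ∂((ℙ : Measure Ω).map Y)) = ∫ ω, id (Y ω) :=
                integral_map hYm aestronglyMeasurable_id
              simpa using this
            simp [hid, measure_univ]
          simp [inner_zero]
  calc (∫ ω, bregman F (Y ω) (G ω))
      = ∫ ω, (bregman F (Y ω) μE + bregman F μE (G ω)
          + ⟪gradient F (G ω), μE - Y ω⟫_ℝ + ⟪gradient F μE, Y ω - μE⟫_ℝ) := by
        exact integral_congr_ae (Filter.Eventually.of_forall key)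
    _ = (∫ ω, bregman F (Y ω) μE) + (∫ ω, bregman F μE (G ω)) := by
        have hI1 : Integrable (fun ω => bregman F (Y ω) μE + bregman F μE (G ω)) :=
          hDYmean.add hDmeanG
        have hI2 : Integrable (fun ω => bregman F (Y ω) μE + bregman F μE (G ω)
            + ⟪gradient F (G ω), μE - Y ω⟫_ℝ) := hI1.add h4
        rw [integral_add hI2 h3, integral_add hI1 h4, integral_add hDYmean hDmeanG,
          hzero1, hzero2]
        ring
end
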